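/- arXiv:2209.07583 — 3 statements merged into one kernel-verified Lean document; each statement's English description precedes it below -/
import Mathlib

section
/- Let C ⊆ 2^{{1,…,n}} be a combinatorial neural code, let σ, τ, v ∈ C, and suppose v is forced between σ and τ: every feasible path in the codeword containment graph G_C from σ to τ passes through v. If U = (U_1, …, U_n) is a convex realization of C in ℝ^d with all U_i open or all U_i closed, then for any x ∈ A_σ and y ∈ A_τ, the line segment from x to y contains a point of the atom A_v. -/
/-- The atom of a subset `σ` of neurons with respect to a family of sets `U`:
`A_σ = (⋂_{i ∈ σ} U_i) \ (⋃_{j ∉ σ} U_j)`. -/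
def atomOf {n : ℕ} {X : Type*} (U : Fin n → Set X) (σ : Set (Fin n)) : Set X :=
  (⋂ i ∈ σ, U i) \ (⋃ j ∈ σᶜ, U j)

/-- The combinatorial code of a family of sets: the collection of subsets with
nonempty atom. -/
def codeOf {n : ℕ} {X : Type*} (U : Fin n → Set X) : Set (Set (Fin n)) :=
  {σ | (atomOf U σ).Nonempty}

/-- A feasible path (of length `L`, recorded as `p 0, …, p (L-1)`) in the codeword
containment graph of a code `C`. -/
def IsFeasiblePath {n : ℕ} (C : Set (Set (Fin n))) (L : ℕ) (p : ℕ → Set (Fin n)) : Prop :=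
  1 ≤ L ∧ (∀ r < L, p r ∈ C) ∧
  (∀ r, r + 1 < L → p r ⊂ p (r + 1) ∨ p (r + 1) ⊂ p r) ∧
  (∀ i j, i < j → j < L → p i ≠ p j) ∧
  (∀ i m j, i < m → m < j → j < L → p i ∩ p j ⊆ p m)

/-!
Parametrise the segment by `t ∈ [0, 1]` and let `c t` be the codeword of the point at time `t`.
Convexity makes each `{t | point ∈ U i}` an interval, so `c s ∩ c u ⊆ c t` for `s ≤ t ≤ u`;
openness (closedness) of the `U i` makes `c t` contained in (containing) every nearby codeword.
A supremum argument gives times `0 = w 0 ≤ ⋯ ≤ w m = 1` with consecutive codewords comparable,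
and cutting out the stretch between two equal codewords preserves this, so a shortest such
sequence has distinct codewords and is a feasible path from `σ` to `τ`. It passes through `v`,
and the corresponding point of the segment lies in the atom of `v`.
-/

open Set Filter Topology Relation

section MonotoneChain

variable {α β : Type*} [Preorder α] (r : β → β → Prop) (c : α → β)

def IsMonotoneChain (m : ℕ) (w : ℕ → α) : Prop :=
  MonotoneOn w (Iic m) ∧ ∀ k < m, r (c (w k)) (c (w (k + 1)))

variable {r c} {m : ℕ} {w : ℕ → α}

theorem IsMonotoneChain.snoc (h : IsMonotoneChain r c m w) {t : α} (hle : w m ≤ t)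
    (hr : r (c (w m)) (c t)) :
    ∃ w', IsMonotoneChain r c (m + 1) w' ∧ w' 0 = w 0 ∧ w' (m + 1) = t := by
  refine ⟨fun k => if k ≤ m then w k else t, ⟨?_, fun k hk => ?_⟩, by simp, by simp⟩
  · intro a ha b hb hab
    simp only [mem_Iic] at ha hb
    by_cases hbm : b ≤ m
    · simpa [hab.trans hbm, hbm] using h.1 (mem_Iic.2 (hab.trans hbm)) (mem_Iic.2 hbm) hab
    · by_cases ham : a ≤ m
      · simpa [ham, hbm] using (h.1 (mem_Iic.2 ham) (mem_Iic.2 le_rfl) ham).trans hle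
      · simp [ham, hbm]
  · by_cases hkm : k + 1 ≤ m
    · simpa [hkm, (Nat.le_succ k).trans hkm] using h.2 k hkm
    · obtain rfl : k = m := by omega
      simpa using hr

theorem IsMonotoneChain.cut (h : IsMonotoneChain r c m w) {i j : ℕ} (hij : i < j) (hjm : j ≤ m)
    (hc : c (w i) = c (w j)) :
    IsMonotoneChain r c (m - (j - i)) fun k => if k ≤ i then w k else w (k + (j - i)) := by
  refine ⟨?_, fun k hk => ?_⟩
  · intro a ha b hb hab
    simp only [mem_Iic] at ha hb
    have hw : ∀ a b, a ≤ b → b ≤ m → w a ≤ w b := fun a b hab hb =>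
      h.1 (mem_Iic.2 (hab.trans hb)) (mem_Iic.2 hb) hab
    dsimp only
    split_ifs <;> apply hw <;> omega
  · by_cases hki : k + 1 ≤ i
    · simpa [hki, (Nat.le_succ k).trans hki] using h.2 k (by omega)
    · by_cases hk' : k = i
      · subst hk'
        simpa [hc, show k + 1 + (j - k) = j + 1 by omega] using h.2 j (by omega)
      · simpa [show ¬ k ≤ i by omega, hki, show k + 1 + (j - i) = k + (j - i) + 1 by omega]
          using h.2 (k + (j - i)) (by omega)

theorem IsMonotoneChain.exists_injOn (h : IsMonotoneChain r c m w) :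
    ∃ m' w', IsMonotoneChain r c m' w' ∧ c (w' 0) = c (w 0) ∧ c (w' m') = c (w m) ∧
      InjOn (c ∘ w') (Iic m') := by
  induction m using Nat.strong_induction_on generalizing w with
  | _ m ih =>
    by_cases hinj : InjOn (c ∘ w) (Iic m)
    · exact ⟨m, w, h, rfl, rfl, hinj⟩
    have shorten : ∀ i j, i < j → j ≤ m → c (w i) = c (w j) →
        ∃ m' w', IsMonotoneChain r c m' w' ∧ c (w' 0) = c (w 0) ∧ c (w' m') = c (w m) ∧
          InjOn (c ∘ w') (Iic m') := by
      intro i j hij hjm hc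
      obtain ⟨m', w', hw', h0, hm, hinj'⟩ := ih _ (by omega) (h.cut hij hjm hc)
      refine ⟨m', w', hw', by simpa using h0, hm.trans ?_, hinj'⟩
      by_cases hmi : m - (j - i) ≤ i
      · have hji : m - (j - i) = i := by omega
        obtain rfl : j = m := by omega
        simpa [hmi, hji] using hc
      · simp [hmi, show m - (j - i) + (j - i) = m by omega]
    simp only [InjOn, mem_Iic, Function.comp_apply, not_forall] at hinj
    obtain ⟨i, hi, j, hj, hc, hne⟩ := hinj
    rcases lt_or_gt_of_ne hne with hij | hji
    · exact shorten i j hij hj hc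
    · exact shorten j i hji hi hc.symm

end MonotoneChain

theorem exists_isMonotoneChain {α β : Type*} [ConditionallyCompleteLinearOrder α]
    [TopologicalSpace α] [OrderTopology α] [DenselyOrdered α] {r : β → β → Prop} [Std.Symm r]
    {c : α → β} (hloc : ∀ t, ∀ᶠ s in 𝓝 t, r (c s) (c t)) {a b : α} (hab : a ≤ b) :
    ∃ m w, IsMonotoneChain r c m w ∧ w 0 = a ∧ w m = b := by
  set S := {t | t ≤ b ∧ ∃ m w, IsMonotoneChain r c m w ∧ w 0 = a ∧ w m = t}
  have haS : a ∈ S := ⟨hab, 0, fun _ => a, ⟨monotoneOn_const, by simp⟩, rfl, rfl⟩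
  have hlub : IsLUB S (sSup S) := isLUB_csSup ⟨a, haS⟩ ⟨b, fun _ ht => ht.1⟩
  set t := sSup S
  obtain ⟨s, hs, hst⟩ :=
    ((hlub.frequently_mem ⟨a, haS⟩).and_eventually (nhdsWithin_le_nhds (hloc t))).exists
  have hs_le : s ≤ t := hlub.1 hs
  obtain ⟨-, m, w, hw, hw0, rfl⟩ := hs
  obtain ⟨w', hw', hw'0, hw't⟩ := hw.snoc hs_le hst
  have htb : t ≤ b := csSup_le ⟨a, haS⟩ fun _ h => h.1
  rcases htb.eq_or_lt with htb | htb
  · exact ⟨m + 1, w', hw', hw'0.trans hw0, hw't.trans htb⟩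
  have := nhdsGT_neBot_of_exists_gt ⟨b, htb⟩
  obtain ⟨u, hu, htu⟩ := ((eventually_mem_set.2 (Ioc_mem_nhdsGT htb)).and
    (nhdsWithin_le_nhds (hloc t))).exists
  obtain ⟨w'', hw'', hw''0, hw''u⟩ := hw'.snoc (hw't ▸ hu.1.le) (hw't ▸ symm_of r htu)
  exact absurd (hlub.1 ⟨hu.2, _, w'', hw'', hw''0.trans (hw'0.trans hw0), hw''u⟩) hu.1.not_ge

theorem IsMonotoneChain.isFeasiblePath {α : Type*} [Preorder α] {n : ℕ} {C : Set (Set (Fin n))}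
    {c : α → Set (Fin n)} {m : ℕ} {w : ℕ → α} (h : IsMonotoneChain (SymmGen (· ⊆ ·)) c m w)
    (hinj : InjOn (c ∘ w) (Iic m)) (hC : ∀ t, c t ∈ C)
    (hbetween : ∀ s t u, s ≤ t → t ≤ u → c s ∩ c u ⊆ c t) :
    IsFeasiblePath C (m + 1) (c ∘ w) := by
  have hne : ∀ i j, i < j → j ≤ m → c (w i) ≠ c (w j) := fun i j hij hj heq =>
    hij.ne (hinj (mem_Iic.2 (hij.le.trans hj)) (mem_Iic.2 hj) heq)
  refine ⟨by omega, fun k _ => hC _, fun k hk => ?_, fun i j hij hj => hne i j hij (by omega),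
    fun i k j hik hkj hj => hbetween _ _ _ (h.1 ?_ ?_ hik.le) (h.1 ?_ ?_ hkj.le)⟩
  · rcases h.2 k (by omega) with hsub | hsub
    · exact .inl (hsub.ssubset_of_ne (hne k (k + 1) k.lt_succ_self (by omega)))
    · exact .inr (hsub.ssubset_of_ne (hne k (k + 1) k.lt_succ_self (by omega)).symm)
  all_goals simp only [mem_Iic]; omega

def codewordOf {ι X : Type*} (U : ι → Set X) (p : X) : Set ι :=
  {i | p ∈ U i}

section Codeword

variable {n : ℕ} {X : Type*} {U : Fin n → Set X} {p : X} {σ : Set (Fin n)}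

theorem mem_atomOf_iff : p ∈ atomOf U σ ↔ codewordOf U p = σ := by
  simp only [atomOf, codewordOf, Set.ext_iff, Set.mem_sdiff, mem_iInter₂, mem_iUnion₂,
    mem_compl_iff, mem_ofPred_eq, not_exists]
  exact ⟨fun h i => ⟨fun hi => by_contra fun hσ => h.2 i hσ hi, h.1 i⟩,
    fun h => ⟨fun i => (h i).2, fun i hσ hi => hσ ((h i).1 hi)⟩⟩

theorem codewordOf_mem_codeOf (U : Fin n → Set X) (p : X) : codewordOf U p ∈ codeOf U :=
  ⟨p, mem_atomOf_iff.2 rfl⟩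

end Codeword

theorem codewordOf_lineMap_inter_subset {ι 𝕜 E : Type*} [Field 𝕜] [LinearOrder 𝕜]
    [IsStrictOrderedRing 𝕜] [AddCommGroup E] [Module 𝕜 E] {U : ι → Set E}
    (hconv : ∀ i, Convex 𝕜 (U i)) (x y : E) {s t u : 𝕜} (hst : s ≤ t) (htu : t ≤ u) :
    codewordOf U (AffineMap.lineMap x y s) ∩ codewordOf U (AffineMap.lineMap x y u) ⊆
      codewordOf U (AffineMap.lineMap x y t) := fun i hi =>
  ((hconv i).affine_preimage (AffineMap.lineMap x y)).ordConnected.out hi.1 hi.2 ⟨hst, htu⟩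

section Local

variable {ι T X : Type*} [Finite ι] [TopologicalSpace T] [TopologicalSpace X] {U : ι → Set X}
  {f : T → X} {t : T}

theorem eventually_codewordOf_subset_of_isOpen (hU : ∀ i, IsOpen (U i)) (hf : ContinuousAt f t) :
    ∀ᶠ s in 𝓝 t, codewordOf U (f t) ⊆ codewordOf U (f s) := by
  refine eventually_all.2 fun i => ?_
  by_cases hi : f t ∈ U i
  · exact Eventually.mono (hf.preimage_mem_nhds ((hU i).mem_nhds hi)) fun _ hs _ => hs
  · exact .of_forall fun _ h => absurd h hi

theorem eventually_codewordOf_subset_of_isClosed (hU : ∀ i, IsClosed (U i))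
    (hf : ContinuousAt f t) : ∀ᶠ s in 𝓝 t, codewordOf U (f s) ⊆ codewordOf U (f t) := by
  refine eventually_all.2 fun i => ?_
  by_cases hi : f t ∈ U i
  · exact .of_forall fun _ _ => hi
  · exact Eventually.mono (hf.preimage_mem_nhds ((hU i).isOpen_compl.mem_nhds hi))
      fun _ hs h => absurd h hs

theorem eventually_symmGen_codewordOf (hU : (∀ i, IsOpen (U i)) ∨ (∀ i, IsClosed (U i)))
    (hf : ContinuousAt f t) :
    ∀ᶠ s in 𝓝 t, SymmGen (· ⊆ ·) (codewordOf U (f s)) (codewordOf U (f t)) := by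
  rcases hU with hU | hU
  · exact (eventually_codewordOf_subset_of_isOpen hU hf).mono fun _ => .of_ge
  · exact (eventually_codewordOf_subset_of_isClosed hU hf).mono fun _ => .of_le

end Local

theorem stmt3_general {n d : ℕ} (C : Set (Set (Fin n)))
    (σ τ v : Set (Fin n))
    (hforced : ∀ (L : ℕ) (p : ℕ → Set (Fin n)), IsFeasiblePath C L p →
      p 0 = σ → p (L - 1) = τ → ∃ r < L, p r = v)
    (U : Fin n → Set (EuclideanSpace ℝ (Fin d)))
    (hconv : ∀ i, Convex ℝ (U i))
    (hoc : (∀ i, IsOpen (U i)) ∨ (∀ i, IsClosed (U i)))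
    (hcode : codeOf U = C)
    (x y : EuclideanSpace ℝ (Fin d))
    (hx : x ∈ atomOf U σ) (hy : y ∈ atomOf U τ) :
    ∃ z ∈ segment ℝ x y, z ∈ atomOf U v := by
  set c : unitInterval → Set (Fin n) := fun t => codewordOf U (AffineMap.lineMap x y (t : ℝ))
  have hloc : ∀ t, ∀ᶠ s in 𝓝 t, SymmGen (· ⊆ ·) (c s) (c t) := fun _ =>
    eventually_symmGen_codewordOf hoc
      (AffineMap.lineMap_continuous.comp continuous_subtype_val).continuousAt
  obtain ⟨m₀, w₀, hw₀, hw₀0, hw₀m⟩ :=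
    exists_isMonotoneChain hloc (zero_le_one : (0 : unitInterval) ≤ 1)
  obtain ⟨m, w, hw, h0, hm, hinj⟩ := hw₀.exists_injOn
  have hpath : IsFeasiblePath C (m + 1) (c ∘ w) :=
    hw.isFeasiblePath hinj (fun _ => hcode ▸ codewordOf_mem_codeOf U _)
      fun _ _ _ hst htu => codewordOf_lineMap_inter_subset hconv x y hst htu
  have hσ : c (w 0) = σ := by
    rw [h0, hw₀0]
    simpa [c, mem_atomOf_iff] using hx
  have hτ : c (w m) = τ := by
    rw [hm, hw₀m]
    simpa [c, mem_atomOf_iff] using hy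
  obtain ⟨k, -, hk⟩ := hforced (m + 1) (c ∘ w) hpath hσ hτ
  exact ⟨_, segment_eq_image_lineMap ℝ x y ▸ mem_image_of_mem _ (w k).2, mem_atomOf_iff.2 hk⟩

/-- If `v` is forced between `σ` and `τ` (every feasible path in `G_C` from `σ` to `τ`
passes through `v`), then in any convex (open or closed) realization, any line segment
from the atom of `σ` to the atom of `τ` contains a point of the atom of `v`. -/
theorem stmt3 {n d : ℕ} (C : Set (Set (Fin n)))
    (σ τ v : Set (Fin n)) (hσ : σ ∈ C) (hτ : τ ∈ C) (hv : v ∈ C)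
    (hforced : ∀ (L : ℕ) (p : ℕ → Set (Fin n)), IsFeasiblePath C L p →
      p 0 = σ → p (L - 1) = τ → ∃ r < L, p r = v)
    (U : Fin n → Set (EuclideanSpace ℝ (Fin d)))
    (hconv : ∀ i, Convex ℝ (U i))
    (hoc : (∀ i, IsOpen (U i)) ∨ (∀ i, IsClosed (U i)))
    (hcode : codeOf U = C)
    (x y : EuclideanSpace ℝ (Fin d))
    (hx : x ∈ atomOf U σ) (hy : y ∈ atomOf U τ) :
    ∃ z ∈ segment ℝ x y, z ∈ atomOf U v :=
  stmt3_general C σ τ v hforced U hconv hoc hcode x y hx hy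
end

section
/- Consider the combinatorial neural code R on the 16 neurons {1,2,3,4,5,6,a,b,c,d,e,f,g,h,i,j} with codewords {1,2,a,b}, {1,3,a,c,e}, {1,4,c,h}, {2,3,b,g,d}, {2,4,d,j}, {3,5,e,f}, {3,6,f,g}, {4,6,h,i}, {4,5,i,j}, {1,a}, {1,c}, {2,b}, {2,d}, {3,e}, {3,f}, {3,g}, {4,i}, {4,h}, {4,j}, {5}, {6}, ∅. Then R is neither open convex nor closed convex: for every d ≥ 1 there is no family of convex open sets in ℝ^d realizing R, and no family of convex closed sets in ℝ^d realizing R. -/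
/-- The code `R` on 16 neurons `{1,…,6, a, b, …, j}`, with neurons `1,…,6` encoded as
`0,…,5 : Fin 16` and `a, b, c, d, e, f, g, h, i, j` encoded as `6, 7, …, 15 : Fin 16`. -/
def codeR : Set (Set (Fin 16)) :=
  {{0, 1, 6, 7},        -- 12ab
   {0, 2, 6, 8, 10},    -- 13ace
   {0, 3, 8, 13},       -- 14ch
   {1, 2, 7, 12, 9},    -- 23bgd
   {1, 3, 9, 15},       -- 24dj
   {2, 4, 10, 11},      -- 35ef
   {2, 5, 11, 12},      -- 36fg
   {3, 5, 13, 14},      -- 46hi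
   {3, 4, 14, 15},      -- 45ij
   {0, 6},              -- 1a
   {0, 8},              -- 1c
   {1, 7},              -- 2b
   {1, 9},              -- 2d
   {2, 10},             -- 3e
   {2, 11},             -- 3f
   {2, 12},             -- 3g
   {3, 14},             -- 4i
   {3, 13},             -- 4h
   {3, 15},             -- 4j
   {4},                 -- 5
   {5},                 -- 6
   ∅}

/-!
Take points `p`, `P`, `Q` with codewords `12ab`, `14ch`, `24dj`. Every codeword containing `1`
contains `a` or `c`, so the segment `[p, P] ⊆ U₁` is covered by `U_a ∪ U_c`; being connected, it
meets `U_a ∩ U_c ⊆ U₃ ∩ U_e` at some `w₁`. Likewise `[p, Q]` meets `U₃ ∩ U_g` at `w₂`. Inside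
`U₃ ⊆ U_e ∪ U_f ∪ U_g`, where `U_e ∩ U_g = ∅`, the segment `[w₁, w₂]` meets `U_f ∩ U_g ⊆ U₆` at
`v₀`, and then `[w₁, v₀]` meets `U_e ∩ U_f ⊆ U₅` at `u₀`. In the same way `U₄` yields
`v₁ ∈ [P, Q] ∩ U_i ∩ U_j ⊆ U₅` and `u₁ ∈ [P, v₁] ∩ U_h ∩ U_i ⊆ U₆`. The segments `[u₀, v₁] ⊆ U₅`
and `[v₀, u₁] ⊆ U₆` are then disjoint, but a linear functional strictly separating them would
have to lie both below and above the threshold at `p`.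
-/

section Codes

variable {n : ℕ} {X : Type*}

theorem codeword_mem_codeOf (U : Fin n → Set X) (p : X) : {i | p ∈ U i} ∈ codeOf U :=
  ⟨p, Set.mem_iInter₂.2 fun _ hi => hi, fun h => by
    obtain ⟨j, hj, hpj⟩ := Set.mem_iUnion₂.1 h
    exact hj hpj⟩

theorem exists_forall_mem_of_mem_codeOf {U : Fin n → Set X} {σ : Set (Fin n)} (hσ : σ ∈ codeOf U) :
    ∃ p, ∀ i ∈ σ, p ∈ U i :=
  let ⟨p, hp⟩ := hσ
  ⟨p, Set.mem_iInter₂.1 hp.1⟩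

end Codes

theorem codeR_relations {X : Type*} {U : Fin 16 → Set X} (hU : codeOf U ⊆ codeR) :
    U 0 ⊆ U 6 ∪ U 8 ∧ U 1 ⊆ U 7 ∪ U 9 ∧
    U 2 ⊆ U 10 ∪ U 11 ∪ U 12 ∧ U 3 ⊆ U 13 ∪ U 14 ∪ U 15 ∧
    U 6 ∩ U 8 ⊆ U 2 ∩ U 10 ∧ U 7 ∩ U 9 ⊆ U 2 ∩ U 12 ∧
    U 10 ∩ U 11 ⊆ U 4 ∧ U 11 ∩ U 12 ⊆ U 5 ∧ U 13 ∩ U 14 ⊆ U 5 ∧ U 14 ∩ U 15 ⊆ U 4 ∧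
    Disjoint (U 10) (U 12) ∧ Disjoint (U 13) (U 15) ∧ Disjoint (U 4) (U 5) := by
  simp only [Set.subset_def, Set.disjoint_left, Set.mem_union, Set.mem_inter_iff, ← forall_and]
  intro p
  have hp := hU (codeword_mem_codeOf U p)
  simp only [codeR, Set.mem_insert_iff, Set.mem_singleton_iff, Set.ext_iff, Set.mem_ofPred_eq] at hp
  casesm* _ ∨ _ <;> simp [*]

theorem IsPreconnected.inter_nonempty_of_isOpen_or_isClosed {X : Type*} [TopologicalSpace X]
    {s u v : Set X} (hs : IsPreconnected s) (huv : IsOpen u ∧ IsOpen v ∨ IsClosed u ∧ IsClosed v)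
    (hsuv : s ⊆ u ∪ v) (hsu : (s ∩ u).Nonempty) (hsv : (s ∩ v).Nonempty) :
    (s ∩ (u ∩ v)).Nonempty := by
  rcases huv with ⟨hu, hv⟩ | ⟨hu, hv⟩
  · exact hs u v hu hv hsuv hsu hsv
  · exact isPreconnected_closed_iff.1 hs u v hu hv hsuv hsu hsv

section Crossing

variable {E ι : Type*} [AddCommGroup E] [Module ℝ E] [TopologicalSpace E] [ContinuousAdd E]
  [ContinuousSMul ℝ E] {U : ι → Set E} {x y : E} {i j k : ι}

theorem exists_mem_segment_inter_of_subset_union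
    (htop : (∀ i, IsOpen (U i)) ∨ ∀ i, IsClosed (U i))
    (hxy : segment ℝ x y ⊆ U i ∪ U j) (hx : x ∈ U i) (hy : y ∈ U j) :
    ∃ z ∈ segment ℝ x y, z ∈ U i ∧ z ∈ U j :=
  (convex_segment x y).isPreconnected.inter_nonempty_of_isOpen_or_isClosed
    (htop.imp (fun h => ⟨h i, h j⟩) fun h => ⟨h i, h j⟩) hxy
    ⟨x, left_mem_segment ℝ x y, hx⟩ ⟨y, right_mem_segment ℝ x y, hy⟩

theorem exists_mem_segment_inter_of_subset_union₃
    (htop : (∀ i, IsOpen (U i)) ∨ ∀ i, IsClosed (U i))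
    (hxy : segment ℝ x y ⊆ U i ∪ U j ∪ U k) (hik : Disjoint (U i) (U k))
    (hx : x ∈ U i) (hy : y ∈ U k) :
    ∃ v ∈ segment ℝ x y, v ∈ U j ∧ v ∈ U k ∧ ∃ u ∈ segment ℝ x v, u ∈ U i ∧ u ∈ U j := by
  obtain ⟨v, hv, hvij, hvk⟩ :=
    (convex_segment x y).isPreconnected.inter_nonempty_of_isOpen_or_isClosed
      (htop.imp (fun h => ⟨(h i).union (h j), h k⟩) fun h => ⟨(h i).union (h j), h k⟩) hxy
      ⟨x, left_mem_segment ℝ x y, Or.inl hx⟩ ⟨y, right_mem_segment ℝ x y, hy⟩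
  have hvj : v ∈ U j := hvij.resolve_left fun hvi => Set.disjoint_left.1 hik hvi hvk
  have hxv : segment ℝ x v ⊆ U i ∪ (U j ∪ U k) := Set.union_assoc _ _ _ ▸
    ((convex_segment x y).segment_subset (left_mem_segment ℝ x y) hv).trans hxy
  obtain ⟨u, hu, hui, hujk⟩ :=
    (convex_segment x v).isPreconnected.inter_nonempty_of_isOpen_or_isClosed
      (htop.imp (fun h => ⟨h i, (h j).union (h k)⟩) fun h => ⟨h i, (h j).union (h k)⟩) hxv
      ⟨x, left_mem_segment ℝ x v, hx⟩ ⟨v, right_mem_segment ℝ x v, Or.inl hvj⟩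
  exact ⟨v, hv, hvj, hvk, u, hu, hui, hujk.resolve_right (Set.disjoint_left.1 hik hui)⟩

end Crossing

namespace LinearMap

variable {𝕜 E : Type*} [Field 𝕜] [LinearOrder 𝕜] [IsStrictOrderedRing 𝕜] [AddCommGroup E]
  [Module 𝕜 E] (f : E →ₗ[𝕜] 𝕜) {x y z : E} {c : 𝕜}

theorem lt_of_mem_segment_of_le (hz : z ∈ segment 𝕜 x y) (hzc : f z < c) (hy : c ≤ f y) :
    f x < c :=
  not_le.1 fun hx => hzc.not_ge ((convex_halfSpace_ge f.isLinear c).segment_subset hx hy hz)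

theorem lt_of_mem_segment_of_ge (hz : z ∈ segment 𝕜 x y) (hzc : c < f z) (hy : f y ≤ c) :
    c < f x :=
  not_le.1 fun hx => hzc.not_ge ((convex_halfSpace_le f.isLinear c).segment_subset hx hy hz)

end LinearMap

theorem isCompact_segment {E : Type*} [AddCommGroup E] [Module ℝ E] [TopologicalSpace E]
    [IsTopologicalAddGroup E] [ContinuousSMul ℝ E] (x y : E) : IsCompact (segment ℝ x y) :=
  convexHull_pair (𝕜 := ℝ) x y ▸ (Set.toFinite {x, y}).isCompact_convexHull ℝ

section Separation

variable {E : Type*} [TopologicalSpace E] [AddCommGroup E] [Module ℝ E] [IsTopologicalAddGroup E]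
  [ContinuousSMul ℝ E] [LocallyConvexSpace ℝ E] [T2Space E]

theorem not_disjoint_segment_segment_of_triangle {p P Q w₁ w₂ u₀ v₀ u₁ v₁ : E}
    (hw₁ : w₁ ∈ segment ℝ p P) (hw₂ : w₂ ∈ segment ℝ p Q)
    (hv₀ : v₀ ∈ segment ℝ w₁ w₂) (hu₀ : u₀ ∈ segment ℝ w₁ v₀)
    (hv₁ : v₁ ∈ segment ℝ P Q) (hu₁ : u₁ ∈ segment ℝ P v₁) :
    ¬Disjoint (segment ℝ u₀ v₁) (segment ℝ v₀ u₁) := by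
  intro hdisj
  obtain ⟨f, a, b, hfa, hab, hfb⟩ := geometric_hahn_banach_compact_closed (convex_segment u₀ v₁)
    (isCompact_segment u₀ v₁) (convex_segment v₀ u₁) (isCompact_segment v₀ u₁).isClosed hdisj
  let g : E →ₗ[ℝ] ℝ := f
  have hu₀a : g u₀ < a := hfa u₀ (left_mem_segment ℝ u₀ v₁)
  have hv₁a : g v₁ < a := hfa v₁ (right_mem_segment ℝ u₀ v₁)
  have hv₀a : a < g v₀ := hab.trans (hfb v₀ (left_mem_segment ℝ v₀ u₁))
  have hu₁a : a < g u₁ := hab.trans (hfb u₁ (right_mem_segment ℝ v₀ u₁))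
  have hw₁a : g w₁ < a := g.lt_of_mem_segment_of_le hu₀ hu₀a hv₀a.le
  have hw₂a : a < g w₂ := g.lt_of_mem_segment_of_ge (segment_symm ℝ w₁ w₂ ▸ hv₀) hv₀a hw₁a.le
  have hPa : a < g P := g.lt_of_mem_segment_of_ge hu₁ hu₁a hv₁a.le
  have hQa : g Q < a := g.lt_of_mem_segment_of_le (segment_symm ℝ P Q ▸ hv₁) hv₁a hPa.le
  exact (g.lt_of_mem_segment_of_le hw₁ hw₁a hPa.le).not_gt
    (g.lt_of_mem_segment_of_ge hw₂ hw₂a hQa.le)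

theorem codeOf_ne_codeR {U : Fin 16 → Set E} (hconv : ∀ i, Convex ℝ (U i))
    (htop : (∀ i, IsOpen (U i)) ∨ ∀ i, IsClosed (U i)) : codeOf U ≠ codeR := by
  intro hcode
  obtain ⟨h0, h1, h2, h3, h6_8, h7_9, h10_11, h11_12, h13_14, h14_15, h10_12, h13_15, h4_5⟩ :=
    codeR_relations hcode.le
  have hpoint : ∀ σ ∈ codeR, ∃ p, ∀ i ∈ σ, p ∈ U i := fun σ hσ =>
    exists_forall_mem_of_mem_codeOf (hcode ▸ hσ)
  obtain ⟨p, hp⟩ := hpoint {0, 1, 6, 7} (by simp [codeR])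
  obtain ⟨P, hP⟩ := hpoint {0, 3, 8, 13} (by simp [codeR])
  obtain ⟨Q, hQ⟩ := hpoint {1, 3, 9, 15} (by simp [codeR])
  simp only [Set.mem_insert_iff, Set.mem_singleton_iff, forall_eq_or_imp, forall_eq] at hp hP hQ
  obtain ⟨hp0, hp1, hp6, hp7⟩ := hp
  obtain ⟨hP0, hP3, hP8, hP13⟩ := hP
  obtain ⟨hQ1, hQ3, hQ9, hQ15⟩ := hQ
  obtain ⟨w₁, hw₁, hw₁6, hw₁8⟩ := exists_mem_segment_inter_of_subset_union htop
    (((hconv 0).segment_subset hp0 hP0).trans h0) hp6 hP8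
  obtain ⟨hw₁2, hw₁10⟩ := h6_8 ⟨hw₁6, hw₁8⟩
  obtain ⟨w₂, hw₂, hw₂7, hw₂9⟩ := exists_mem_segment_inter_of_subset_union htop
    (((hconv 1).segment_subset hp1 hQ1).trans h1) hp7 hQ9
  obtain ⟨hw₂2, hw₂12⟩ := h7_9 ⟨hw₂7, hw₂9⟩
  obtain ⟨v₀, hv₀, hv₀11, hv₀12, u₀, hu₀, hu₀10, hu₀11⟩ :=
    exists_mem_segment_inter_of_subset_union₃ htop
      (((hconv 2).segment_subset hw₁2 hw₂2).trans h2) h10_12 hw₁10 hw₂12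
  obtain ⟨v₁, hv₁, hv₁14, hv₁15, u₁, hu₁, hu₁13, hu₁14⟩ :=
    exists_mem_segment_inter_of_subset_union₃ htop
      (((hconv 3).segment_subset hP3 hQ3).trans h3) h13_15 hP13 hQ15
  refine not_disjoint_segment_segment_of_triangle hw₁ hw₂ hv₀ hu₀ hv₁ hu₁ (h4_5.mono ?_ ?_)
  · exact (hconv 4).segment_subset (h10_11 ⟨hu₀10, hu₀11⟩) (h14_15 ⟨hv₁14, hv₁15⟩)
  · exact (hconv 5).segment_subset (h11_12 ⟨hv₀11, hv₀12⟩) (h13_14 ⟨hu₁13, hu₁14⟩)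

end Separation

/-- The code `R` is neither open convex nor closed convex in any dimension `d ≥ 1`. -/
theorem stmt5 : ∀ d : ℕ, 1 ≤ d →
    (¬ ∃ U : Fin 16 → Set (EuclideanSpace ℝ (Fin d)),
        (∀ i, Convex ℝ (U i)) ∧ (∀ i, IsOpen (U i)) ∧ codeOf U = codeR) ∧
    (¬ ∃ U : Fin 16 → Set (EuclideanSpace ℝ (Fin d)),
        (∀ i, Convex ℝ (U i)) ∧ (∀ i, IsClosed (U i)) ∧ codeOf U = codeR) := by
  intro d _
  exact ⟨fun ⟨_, hconv, hopen, hcode⟩ => codeOf_ne_codeR hconv (.inl hopen) hcode,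
    fun ⟨_, hconv, hclosed, hcode⟩ => codeOf_ne_codeR hconv (.inr hclosed) hcode⟩
end

section
/- Let v_1, …, v_m ∈ ℝ^d and w_1, …, w_n ∈ ℝ^d all have nonnegative coordinates, let f : ℝ → ℝ be strictly increasing, and let A be the m×n matrix with A_{ij} = f(⟨v_i, w_j⟩). If i is a minimal node of A, then v_i is an extreme point of the Minkowski sum conv{v_1, …, v_m} + ℝ^d_{≥0}, where ℝ^d_{≥0} is the nonnegative orthant. If i is a maximal node of A, then v_i is an extreme point of conv{v_1, …, v_m} + ℝ^d_{≤0}, where ℝ^d_{≤0} is the nonpositive orthant. -/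
open Pointwise

/-!
Take a column `j` witnessing that `i` is a minimal node and let `L = ⟨·, w_j⟩`. Since `f` is
strictly increasing, `v_i` is the unique minimiser of `L` on `{v_1, …, v_m}`, hence on its convex
hull (the set `{v_i} ∪ {y | L v_i < L y}` is convex), while `L ≥ 0` on the nonnegative orthant.
If `v_i` lies in an open segment between points `h₁ + p₁` and `h₂ + p₂` of the Minkowski sum,
comparing values of `L` forces `h₁ = h₂ = v_i`; then `p₁` and `p₂` are positive multiples of
each other's negatives, so both vanish because the orthant is a salient cone. A maximal node is
handled in the same way with `-L` and the nonpositive orthant.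
-/

section
variable {E : Type*} [AddCommGroup E] [Module ℝ E]

lemma convex_insert_setOf_lt (L : E →ₗ[ℝ] ℝ) (x : E) :
    Convex ℝ (insert x {y | L x < L y}) := by
  refine convex_iff_forall_pos.2 fun y₁ hy₁ y₂ hy₂ a b ha hb hab => ?_
  have hle : ∀ y ∈ insert x {y | L x < L y}, L x ≤ L y := by
    rintro y (rfl | hy)
    exacts [le_rfl, le_of_lt hy]
  by_cases h : y₁ = x ∧ y₂ = x
  · obtain ⟨rfl, rfl⟩ := h
    left
    rw [← add_smul, hab, one_smul]
  have hpos : 0 < a * (L y₁ - L x) + b * (L y₂ - L x) := by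
    rcases not_and_or.1 h with h₁ | h₂
    · exact add_pos_of_pos_of_nonneg (mul_pos ha (sub_pos.2 (hy₁.resolve_left h₁)))
        (mul_nonneg hb.le (sub_nonneg.2 (hle y₂ hy₂)))
    · exact add_pos_of_nonneg_of_pos (mul_nonneg ha.le (sub_nonneg.2 (hle y₁ hy₁)))
        (mul_pos hb (sub_pos.2 (hy₂.resolve_left h₂)))
  right
  change L x < L (a • y₁ + b • y₂)
  rw [map_add, map_smul, map_smul, smul_eq_mul, smul_eq_mul]
  linear_combination hpos - L x * hab

lemma convexHull_subset_insert_setOf_lt {s : Set E} {x : E} (L : E →ₗ[ℝ] ℝ)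
    (hs : ∀ y ∈ s, y ≠ x → L x < L y) : convexHull ℝ s ⊆ insert x {y | L x < L y} :=
  convexHull_min (fun y hy => (eq_or_ne y x).imp id (hs y hy)) (convex_insert_setOf_lt L x)

lemma ConvexCone.Salient.eq_zero_of_smul_add_smul_eq_zero {C : ConvexCone ℝ E} (hC : C.Salient)
    {p q : E} (hp : p ∈ C) (hq : q ∈ C) {a b : ℝ} (ha : 0 < a) (hb : 0 < b)
    (h : a • p + b • q = 0) : p = 0 := by
  have hap : a • p = 0 := by
    by_contra hne
    exact hC _ (C.smul_mem ha hp) hne (eq_neg_of_add_eq_zero_right h ▸ C.smul_mem hb hq)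
  exact (smul_eq_zero.1 hap).resolve_left ha.ne'

theorem mem_extremePoints_convexHull_add_convexCone {s : Set E} {x : E} (L : E →ₗ[ℝ] ℝ)
    {C : ConvexCone ℝ E} (hC₀ : C.Pointed) (hC : C.Salient) (hLC : ∀ p ∈ C, 0 ≤ L p)
    (hx : x ∈ s) (hs : ∀ y ∈ s, y ≠ x → L x < L y) :
    x ∈ (convexHull ℝ s + C).extremePoints ℝ := by
  have hbound : ∀ h ∈ convexHull ℝ s, ∀ p ∈ C,
      L x ≤ L (h + p) ∧ (L (h + p) ≤ L x → h = x) := by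
    intro h hh p hp
    have hLp := hLC p hp
    rw [map_add]
    rcases convexHull_subset_insert_setOf_lt L hs hh with rfl | (hlt : L x < L h)
    · exact ⟨le_add_of_nonneg_right hLp, fun _ => rfl⟩
    · exact ⟨by linarith, fun _ => by exfalso; linarith⟩
  refine ⟨⟨x, subset_convexHull ℝ s hx, 0, hC₀, add_zero x⟩, ?_⟩
  rintro _ ⟨h₁, hh₁, p₁, hp₁, rfl⟩ _ ⟨h₂, hh₂, p₂, hp₂, rfl⟩ ⟨a, b, ha, hb, hab, hseg⟩
  dsimp only at hseg ⊢
  obtain ⟨hle₁, heq₁⟩ := hbound h₁ hh₁ p₁ hp₁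
  obtain ⟨hle₂, heq₂⟩ := hbound h₂ hh₂ p₂ hp₂
  have hsum : a * (L (h₁ + p₁) - L x) + b * (L (h₂ + p₂) - L x) = 0 := by
    have hL := congrArg L hseg
    rw [map_add, map_smul, map_smul, smul_eq_mul, smul_eq_mul] at hL
    linear_combination hL - L x * hab
  obtain ⟨z₁, z₂⟩ := (add_eq_zero_iff_of_nonneg (mul_nonneg ha.le (sub_nonneg.2 hle₁))
    (mul_nonneg hb.le (sub_nonneg.2 hle₂))).1 hsum
  obtain rfl : h₁ = x := heq₁ (sub_eq_zero.1 ((mul_eq_zero.1 z₁).resolve_left ha.ne')).le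
  obtain rfl : h₂ = h₁ := heq₂ (sub_eq_zero.1 ((mul_eq_zero.1 z₂).resolve_left hb.ne')).le
  have hp : a • p₁ + b • p₂ = 0 := by
    rw [smul_add, smul_add, add_add_add_comm, ← add_smul, hab, one_smul] at hseg
    exact left_eq_add.1 hseg.symm
  rw [hC.eq_zero_of_smul_add_smul_eq_zero hp₁ hp₂ ha hb hp, add_zero]
end

namespace ConvexCone

section NegativeCone
variable {R M : Type*} [Semiring R] [PartialOrder R] [AddCommMonoid M] [PartialOrder M]
  [IsOrderedAddMonoid M] [Module R M] [PosSMulMono R M]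

variable (R M) in
def negative : ConvexCone R M where
  carrier := Set.Iic 0
  smul_mem' _ hc _ (hx : _ ≤ _) := smul_nonpos_of_nonneg_of_nonpos hc.le hx
  add_mem' _ (hx : _ ≤ _) _ (hy : _ ≤ _) := add_nonpos hx hy

lemma salient_negative {G : Type*} [AddCommGroup G] [PartialOrder G] [IsOrderedAddMonoid G]
    [Module R G] [PosSMulMono R G] : Salient (negative R G) :=
  fun _ hx hx0 hnx => hx0 (le_antisymm hx (neg_nonpos.1 hnx))

theorem pointed_negative : Pointed (negative R M) :=
  le_refl 0

end NegativeCone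

end ConvexCone

section DotProduct
variable {ι κ : Type*} [Fintype κ] {v : ι → κ → ℝ} {w : κ → ℝ} {i : ι}

open ConvexCone in
theorem mem_extremePoints_convexHull_range_add_Ici (hw : 0 ≤ w)
    (h : ∀ k ≠ i, v i ⬝ᵥ w < v k ⬝ᵥ w) :
    v i ∈ (convexHull ℝ (Set.range v) + Set.Ici 0).extremePoints ℝ :=
  mem_extremePoints_convexHull_add_convexCone ((dotProductBilin ℝ ℝ).flip w) pointed_positive
    salient_positive (fun _ hp => dotProduct_nonneg_of_nonneg hp hw) (Set.mem_range_self i)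
    (by rintro _ ⟨k, rfl⟩ hk; exact h k (ne_of_apply_ne v hk))

open ConvexCone in
theorem mem_extremePoints_convexHull_range_add_Iic (hw : 0 ≤ w)
    (h : ∀ k ≠ i, v k ⬝ᵥ w < v i ⬝ᵥ w) :
    v i ∈ (convexHull ℝ (Set.range v) + Set.Iic 0).extremePoints ℝ :=
  mem_extremePoints_convexHull_add_convexCone (-(dotProductBilin ℝ ℝ).flip w) pointed_negative
    salient_negative
    (fun p hp => neg_nonneg.2 (zero_dotProduct w ▸ dotProduct_le_dotProduct_of_nonneg_right hp hw))
    (Set.mem_range_self i)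
    (by rintro _ ⟨k, rfl⟩ hk; exact neg_lt_neg (h k (ne_of_apply_ne v hk)))

end DotProduct

theorem stmt13_general {m n d : ℕ} (v : Fin m → Fin d → ℝ) (w : Fin n → Fin d → ℝ)
    (hw : ∀ j k, 0 ≤ w j k)
    (f : ℝ → ℝ) (hf : StrictMono f) (A : Matrix (Fin m) (Fin n) ℝ)
    (hA : ∀ i j, A i j = f (∑ k, v i k * w j k))
    (i : Fin m) :
    ((∃ j, ∀ k, k ≠ i → A i j < A k j) →
      v i ∈ Set.extremePoints ℝ
        (convexHull ℝ (Set.range v) + {x : Fin d → ℝ | ∀ k, 0 ≤ x k})) ∧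
    ((∃ j, ∀ k, k ≠ i → A k j < A i j) →
      v i ∈ Set.extremePoints ℝ
        (convexHull ℝ (Set.range v) + {x : Fin d → ℝ | ∀ k, x k ≤ 0})) := by
  have hA_lt : ∀ k l j, A k j < A l j ↔ v k ⬝ᵥ w j < v l ⬝ᵥ w j := fun k l j => by
    rw [hA, hA]
    exact hf.lt_iff_lt
  refine ⟨fun ⟨j, hj⟩ => ?_, fun ⟨j, hj⟩ => ?_⟩
  · exact mem_extremePoints_convexHull_range_add_Ici (hw j) fun k hk => (hA_lt i k j).1 (hj k hk)
  · exact mem_extremePoints_convexHull_range_add_Iic (hw j) fun k hk => (hA_lt k i j).1 (hj k hk)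

/-- For a nonnegative rank-`d` representation `A_{ij} = f(⟨v_i, w_j⟩)` (all points in
the nonnegative orthant, `f` strictly increasing): a minimal node `i` gives an extreme
point `v_i` of `conv{v_1,…,v_m} + ℝ^d_{≥0}`, and a maximal node `i` gives an extreme
point `v_i` of `conv{v_1,…,v_m} + ℝ^d_{≤0}` (Minkowski sums). -/
theorem stmt13 {m n d : ℕ} (v : Fin m → Fin d → ℝ) (w : Fin n → Fin d → ℝ)
    (hv : ∀ i k, 0 ≤ v i k) (hw : ∀ j k, 0 ≤ w j k)
    (f : ℝ → ℝ) (hf : StrictMono f) (A : Matrix (Fin m) (Fin n) ℝ)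
    (hA : ∀ i j, A i j = f (∑ k, v i k * w j k))
    (i : Fin m) :
    ((∃ j, ∀ k, k ≠ i → A i j < A k j) →
      v i ∈ Set.extremePoints ℝ
        (convexHull ℝ (Set.range v) + {x : Fin d → ℝ | ∀ k, 0 ≤ x k})) ∧
    ((∃ j, ∀ k, k ≠ i → A k j < A i j) →
      v i ∈ Set.extremePoints ℝ
        (convexHull ℝ (Set.range v) + {x : Fin d → ℝ | ∀ k, x k ≤ 0})) :=
  stmt13_general v w hw f hf A hA i
end
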